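/- Let Q be a countable dense subset of the Cantor space 2^ω, let T be a Gδ subset of 2^ω × 2^ω with Q × Q ⊆ T, and let g : T → T be a homeomorphism of the subspace T onto itself such that the map sending (x,y) ∈ Q × Q to the first coordinate π₀(g(x,y)) of g(x,y) is injective on Q × Q. Then for every homeomorphism h of 2^ω and each i ∈ {0,1}, the set C_h^i = {(x,y) ∈ T : h(π_i(x,y)) = π₀(g(x,y))} is closed and nowhere dense in the subspace T. -/

import Mathlib

/-!
On `C = {p | h (πᵢ p) = π₀ (g p)}` the map `p ↦ π₀ (g p)`, injective on `Q × Q`, equals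
`h ∘ πᵢ`, so `πᵢ` is injective on `C ∩ (Q × Q)`. If `C` had interior, this interior would
contain a point of the dense set `Q × Q`, and moving its other coordinate slightly within `Q`
(possible as Cantor space has no isolated points) gives a second point of `Q × Q` in `C`
with the same `πᵢ`.
-/

open Set Filter Topology

instance Pi.perfectSpace_of_infinite {ι : Type*} {π : ι → Type*} [∀ i, TopologicalSpace (π i)]
    [Infinite ι] [∀ i, Nontrivial (π i)] : PerfectSpace (∀ i, π i) := by
  classical
  refine perfectSpace_iff_forall_not_isolated.2 fun x => mem_closure_iff_nhdsWithin_neBot.1 ?_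
  choose y hy using fun n => exists_ne (x n)
  have hlim : Tendsto (fun n => Function.update x n (y n)) cofinite (𝓝 x) :=
    tendsto_pi_nhds.2 fun i => tendsto_const_nhds.congr' <|
      (eventually_cofinite_ne i).mono fun n hn => (Function.update_of_ne hn.symm _ _).symm
  refine mem_closure_of_tendsto hlim (Eventually.of_forall fun n hn => hy n ?_)
  simpa using congrFun hn n

theorem Dense.preimage_val_of_subset {X : Type*} [TopologicalSpace X] {s t : Set X}
    (hs : Dense s) (hst : s ⊆ t) : Dense ((↑) ⁻¹' s : Set t) :=
  IsInducing.subtypeVal.dense_iff.2 fun x => by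
    rw [Subtype.image_preimage_coe, inter_eq_right.2 hst]
    exact hs x

theorem Dense.interior_setOf_comp_eq_eq_empty {P W Z : Type*} [TopologicalSpace P] {S : Set P}
    (hS : Dense S) {f : P → Z} (hf : InjOn f S) {π : P → W}
    (hπ : ∀ U, IsOpen U → (U ∩ S).Nonempty → ¬ InjOn π (U ∩ S)) (φ : W → Z) :
    interior {p | φ (π p) = f p} = ∅ := by
  by_contra hne
  refine hπ _ isOpen_interior
    (hS.inter_open_nonempty _ isOpen_interior (nonempty_iff_ne_empty.2 hne)) ?_
  rintro p ⟨hpC, hpS⟩ q ⟨hqC, hqS⟩ hpq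
  have hp : φ (π p) = f p := interior_subset (s := {p | φ (π p) = f p}) hpC
  have hq : φ (π q) = f q := interior_subset (s := {p | φ (π p) = f p}) hqC
  exact hf hpS hqS (by rw [← hp, ← hq, hpq])

section ProdSubtype

variable {X Y : Type*} [TopologicalSpace X] [TopologicalSpace Y] {T : Set (X × Y)}
  {A : Set X} {B : Set Y} {U : Set T}

theorem not_injOn_fst_of_isOpen [T1Space Y] [PerfectSpace Y] (hAB : A ×ˢ B ⊆ T)
    (hB : Dense B) (hU : IsOpen U) (hne : (U ∩ (↑) ⁻¹' (A ×ˢ B)).Nonempty) :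
    ¬ InjOn (fun p : T => p.1.1) (U ∩ (↑) ⁻¹' (A ×ˢ B)) := by
  obtain ⟨p, hpU, hpA, hpB⟩ := hne
  obtain ⟨V, hV, rfl⟩ := isOpen_induced_iff.mp hU
  obtain ⟨b, ⟨hbB, hbp⟩, hbV⟩ := (hB.sdiff_singleton p.1.2).exists_mem_open
    (hV.preimage (Continuous.prodMk_right p.1.1)) ⟨p.1.2, hpU⟩
  intro hinj
  have hq : (⟨(p.1.1, b), hAB ⟨hpA, hbB⟩⟩ : T) = p :=
    hinj (x₁ := ⟨(p.1.1, b), hAB ⟨hpA, hbB⟩⟩) ⟨hbV, hpA, hbB⟩ ⟨hpU, hpA, hpB⟩ rfl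
  exact hbp (congrArg (fun q : T => q.1.2) hq)

theorem not_injOn_snd_of_isOpen [T1Space X] [PerfectSpace X] (hAB : A ×ˢ B ⊆ T)
    (hA : Dense A) (hU : IsOpen U) (hne : (U ∩ (↑) ⁻¹' (A ×ˢ B)).Nonempty) :
    ¬ InjOn (fun p : T => p.1.2) (U ∩ (↑) ⁻¹' (A ×ˢ B)) := by
  obtain ⟨p, hpU, hpA, hpB⟩ := hne
  obtain ⟨V, hV, rfl⟩ := isOpen_induced_iff.mp hU
  obtain ⟨a, ⟨haA, hap⟩, haV⟩ := (hA.sdiff_singleton p.1.1).exists_mem_open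
    (hV.preimage (Continuous.prodMk_left p.1.2)) ⟨p.1.1, hpU⟩
  intro hinj
  have hq : (⟨(a, p.1.2), hAB ⟨haA, hpB⟩⟩ : T) = p :=
    hinj (x₁ := ⟨(a, p.1.2), hAB ⟨haA, hpB⟩⟩) ⟨haV, haA, hpB⟩ ⟨hpU, hpA, hpB⟩ rfl
  exact hap (congrArg (fun q : T => q.1.1) hq)

end ProdSubtype

theorem killing_sets_closed_nowhere_dense_general
    (Q : Set (ℕ → Bool)) (hQd : Dense Q)
    (T : Set ((ℕ → Bool) × (ℕ → Bool))) (hQT : Q ×ˢ Q ⊆ T)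
    (g : ↥T ≃ₜ ↥T)
    (hinj : Set.InjOn (fun p : ↥T => ((g p : ↥T) : (ℕ → Bool) × (ℕ → Bool)).1)
      {p : ↥T | (p : (ℕ → Bool) × (ℕ → Bool)) ∈ Q ×ˢ Q}) :
    ∀ (h : (ℕ → Bool) ≃ₜ (ℕ → Bool)) (i : Fin 2),
      IsClosed {p : ↥T | h (if i = 0 then (p : (ℕ → Bool) × (ℕ → Bool)).1
          else (p : (ℕ → Bool) × (ℕ → Bool)).2) = ((g p : ↥T) : (ℕ → Bool) × (ℕ → Bool)).1} ∧
      IsNowhereDense {p : ↥T | h (if i = 0 then (p : (ℕ → Bool) × (ℕ → Bool)).1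
          else (p : (ℕ → Bool) × (ℕ → Bool)).2) = ((g p : ↥T) : (ℕ → Bool) × (ℕ → Bool)).1} := by
  intro h i
  have hclosed : IsClosed {p : ↥T | h (if i = 0 then (p : (ℕ → Bool) × (ℕ → Bool)).1
      else (p : (ℕ → Bool) × (ℕ → Bool)).2) = ((g p : ↥T) : (ℕ → Bool) × (ℕ → Bool)).1} :=
    isClosed_eq (h.continuous.comp (continuous_if_const _ (fun _ => by fun_prop)
      fun _ => by fun_prop)) (by fun_prop)
  refine ⟨hclosed, hclosed.isNowhereDense_iff.2 ?_⟩
  refine ((hQd.prod hQd).preimage_val_of_subset hQT).interior_setOf_comp_eq_eq_empty hinj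
    (π := fun p : ↥T => if i = 0 then p.1.1 else p.1.2) (fun U hU hne => ?_) h
  fin_cases i
  · exact not_injOn_fst_of_isOpen hQT hQd hU hne
  · exact not_injOn_snd_of_isOpen hQT hQd hU hne

/-- If `g : T → T` is a homeomorphism of a Gδ subset `T ⊇ Q × Q` of `2^ω × 2^ω`
such that `(x,y) ↦ π₀(g(x,y))` is injective on `Q × Q` (with `Q` countable dense),
then for every homeomorphism `h` of `2^ω` and each `i ∈ {0,1}`, the set
`C_h^i = {(x,y) ∈ T : h(π_i(x,y)) = π₀(g(x,y))}` is closed and nowhere dense in `T`. -/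
theorem killing_sets_closed_nowhere_dense
    (Q : Set (ℕ → Bool)) (hQc : Q.Countable) (hQd : Dense Q)
    (T : Set ((ℕ → Bool) × (ℕ → Bool))) (hT : IsGδ T) (hQT : Q ×ˢ Q ⊆ T)
    (g : ↥T ≃ₜ ↥T)
    (hinj : Set.InjOn (fun p : ↥T => ((g p : ↥T) : (ℕ → Bool) × (ℕ → Bool)).1)
      {p : ↥T | (p : (ℕ → Bool) × (ℕ → Bool)) ∈ Q ×ˢ Q}) :
    ∀ (h : (ℕ → Bool) ≃ₜ (ℕ → Bool)) (i : Fin 2),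
      IsClosed {p : ↥T | h (if i = 0 then (p : (ℕ → Bool) × (ℕ → Bool)).1
          else (p : (ℕ → Bool) × (ℕ → Bool)).2) = ((g p : ↥T) : (ℕ → Bool) × (ℕ → Bool)).1} ∧
      IsNowhereDense {p : ↥T | h (if i = 0 then (p : (ℕ → Bool) × (ℕ → Bool)).1
          else (p : (ℕ → Bool) × (ℕ → Bool)).2) = ((g p : ↥T) : (ℕ → Bool) × (ℕ → Bool)).1} :=
  killing_sets_closed_nowhere_dense_general Q hQd T hQT g hinj
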